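/- arXiv:2604.11787 — 2 statements merged into one kernel-verified Lean document; each statement's English description precedes it below -/
import Mathlib

section
/- Let β : [0,∞) → ℝ be continuous and suppose there exists T > 2 such that for all t ≥ T-2, |β(t)| ≤ t/16 and for every integer n ≥ T-2, the α-Hölder seminorm of β on [n,n+1] is at most e^{n/16}. Then for h(t) = e^{-2β(t)-2t}, there is a constant C such that the α-Hölder seminorm of h on [T-1,∞) is at most C e^{-T/3}. -/
set_option maxHeartbeats 1000000

lemma exp_sub_one_le_mul {u : ℝ} (hu : 0 ≤ u) : Real.exp u - 1 ≤ u * Real.exp u := by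
  have h1 : (-u) + 1 ≤ Real.exp (-u) := Real.add_one_le_exp _
  rw [Real.exp_neg] at h1
  have h2 : Real.exp u * (Real.exp u)⁻¹ = 1 := mul_inv_cancel₀ (Real.exp_pos u).ne'
  nlinarith [Real.exp_pos u]

lemma abs_exp_sub_exp (x y : ℝ) :
    |Real.exp x - Real.exp y| ≤ Real.exp (max x y) * |x - y| := by
  wlog h : y ≤ x with H
  · rw [abs_sub_comm, max_comm, abs_sub_comm x y]
    exact H y x (le_of_not_ge h)
  have hu : 0 ≤ x - y := sub_nonneg.2 h
  rw [max_eq_left h, abs_of_nonneg (sub_nonneg.2 (Real.exp_le_exp.2 h)), abs_of_nonneg hu]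
  have key := exp_sub_one_le_mul hu
  have hey := (Real.exp_pos y).le
  have e1 : Real.exp y * Real.exp (x - y) = Real.exp x := by
    rw [← Real.exp_add]; ring_nf
  nlinarith [mul_le_mul_of_nonneg_left key hey]

lemma key_dir (α : ℝ) (hα0 : 0 < α) (hα1 : α < 1 / 2)
    (β : ℝ → ℝ) (T : ℝ) (hT : 2 < T)
    (hg : ∀ t : ℝ, T - 2 ≤ t → |β t| ≤ t / 16)
    (hH : ∀ n : ℕ, T - 2 ≤ (n : ℝ) →
        ∀ s ∈ Set.Icc (n : ℝ) ((n : ℝ) + 1), ∀ t ∈ Set.Icc (n : ℝ) ((n : ℝ) + 1),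
          |β t - β s| ≤ Real.exp ((n : ℝ) / 16) * |t - s| ^ α)
    (s t : ℝ) (hs : T - 1 ≤ s) (hst : s < t) :
    |Real.exp (-2 * β t - 2 * t) - Real.exp (-2 * β s - 2 * s)|
      ≤ 100 * Real.exp 2 * Real.exp (-T / 3) * |t - s| ^ α := by
  have hts0 : (0:ℝ) < t - s := sub_pos.2 hst
  have habs : |t - s| = t - s := abs_of_pos hts0
  have hαle1 : α ≤ 1 := by linarith
  -- pointwise exponent bound
  have hexpbd : ∀ u : ℝ, T - 1 ≤ u → -2 * β u - 2 * u ≤ -15 * u / 8 := by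
    intro u hu
    have := hg u (by linarith)
    have := abs_le.1 this
    linarith [this.1]
  have hxs : -2 * β s - 2 * s ≤ -15 * s / 8 := hexpbd s hs
  have hxt : -2 * β t - 2 * t ≤ -15 * t / 8 := hexpbd t (by linarith)
  rcases le_or_gt 1 (t - s) with h1 | h1
  · -- far apart case
    have hpow : (1:ℝ) ≤ |t - s| ^ α := by
      rw [habs]
      calc (1:ℝ) = 1 ^ α := (Real.one_rpow α).symm
        _ ≤ (t - s) ^ α := Real.rpow_le_rpow zero_le_one h1 hα0.le
    have hbd : |Real.exp (-2 * β t - 2 * t) - Real.exp (-2 * β s - 2 * s)|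
        ≤ 2 * Real.exp (-15 * (T - 1) / 8) := by
      have e1 : Real.exp (-2 * β t - 2 * t) ≤ Real.exp (-15 * (T - 1) / 8) :=
        Real.exp_le_exp.2 (by nlinarith)
      have e2 : Real.exp (-2 * β s - 2 * s) ≤ Real.exp (-15 * (T - 1) / 8) :=
        Real.exp_le_exp.2 (by nlinarith)
      have := abs_sub (Real.exp (-2 * β t - 2 * t)) (Real.exp (-2 * β s - 2 * s))
      calc |Real.exp (-2 * β t - 2 * t) - Real.exp (-2 * β s - 2 * s)|
          ≤ |Real.exp (-2 * β t - 2 * t)| + |Real.exp (-2 * β s - 2 * s)| := abs_sub _ _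
        _ ≤ 2 * Real.exp (-15 * (T - 1) / 8) := by
            rw [abs_of_pos (Real.exp_pos _), abs_of_pos (Real.exp_pos _)]; linarith
    have hc : 2 * Real.exp (-15 * (T - 1) / 8) ≤ 100 * Real.exp 2 * Real.exp (-T / 3) := by
      rw [mul_assoc, ← Real.exp_add]
      have : Real.exp (-15 * (T - 1) / 8) ≤ Real.exp (2 + -T / 3) :=
        Real.exp_le_exp.2 (by nlinarith)
      linarith [Real.exp_pos (2 + -T/3)]
    calc |Real.exp (-2 * β t - 2 * t) - Real.exp (-2 * β s - 2 * s)|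
        ≤ 100 * Real.exp 2 * Real.exp (-T / 3) := le_trans hbd hc
      _ ≤ 100 * Real.exp 2 * Real.exp (-T / 3) * |t - s| ^ α :=
          le_mul_of_one_le_right (by positivity) hpow
  · -- close case
    set n : ℕ := ⌊s⌋₊ with hn
    have hs0 : (0:ℝ) ≤ s := by linarith
    have hns : (n : ℝ) ≤ s := Nat.floor_le hs0
    have hsn1 : s < (n : ℝ) + 1 := Nat.lt_floor_add_one s
    have hnT : T - 2 ≤ (n : ℝ) := le_of_lt (lt_of_le_of_lt (by linarith) (Nat.sub_one_lt_floor s))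
    have hpowle : ∀ x : ℝ, 0 ≤ x → x ≤ t - s → x ^ α ≤ (t - s) ^ α :=
      fun x hx hx2 => Real.rpow_le_rpow hx hx2 hα0.le
    have hts1 : t - s ≤ (t - s) ^ α := by
      calc t - s = (t - s) ^ (1:ℝ) := (Real.rpow_one _).symm
        _ ≤ (t - s) ^ α := Real.rpow_le_rpow_of_exponent_ge hts0 (by linarith) hαle1
    -- Hölder bound for β
    have hβ : |β t - β s| ≤ 2 * Real.exp (((n : ℝ) + 1) / 16) * (t - s) ^ α := by
      have hexpmono : Real.exp ((n : ℝ) / 16) ≤ Real.exp (((n : ℝ) + 1) / 16) :=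
        Real.exp_le_exp.2 (by linarith)
      by_cases htn : t ≤ (n : ℝ) + 1
      · have := hH n hnT s ⟨hns, hsn1.le⟩ t ⟨by linarith, htn⟩
        rw [habs] at this
        nlinarith [Real.rpow_nonneg hts0.le α, Real.exp_pos (((n:ℝ)+1)/16)]
      · push_neg at htn
        have hn1T : T - 2 ≤ ((n + 1 : ℕ) : ℝ) := by push_cast; linarith
        have h2 := hH n hnT s ⟨hns, hsn1.le⟩ ((n : ℝ) + 1) ⟨by linarith, le_refl _⟩
        have h3 := hH (n + 1) hn1T ((n : ℝ) + 1) (by constructor <;> push_cast <;> linarith)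
          t (by constructor <;> push_cast <;> linarith)
        push_cast at h3
        have e2 : |(n : ℝ) + 1 - s| = (n : ℝ) + 1 - s := abs_of_nonneg (by linarith)
        have e3 : |t - ((n : ℝ) + 1)| = t - ((n : ℝ) + 1) := abs_of_nonneg (by linarith)
        rw [e2] at h2; rw [e3] at h3
        have p2 : ((n : ℝ) + 1 - s) ^ α ≤ (t - s) ^ α := hpowle _ (by linarith) (by linarith)
        have p3 : (t - ((n : ℝ) + 1)) ^ α ≤ (t - s) ^ α := hpowle _ (by linarith) (by linarith)
        have tri : |β t - β s| ≤ |β t - β ((n : ℝ) + 1)| + |β ((n : ℝ) + 1) - β s| := by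
          calc |β t - β s| = |(β t - β ((n:ℝ)+1)) + (β ((n:ℝ)+1) - β s)| := by ring_nf
            _ ≤ _ := abs_add_le _ _
        nlinarith [Real.exp_pos (((n:ℝ)+1)/16), Real.exp_pos ((n:ℝ)/16)]
    -- exponent difference bound
    have hdiff : |(-2 * β t - 2 * t) - (-2 * β s - 2 * s)|
        ≤ 6 * Real.exp (((n : ℝ) + 1) / 16) * (t - s) ^ α := by
      have h4 : |(-2 * β t - 2 * t) - (-2 * β s - 2 * s)| ≤ 2 * |β t - β s| + 2 * (t - s) := by
        have : (-2 * β t - 2 * t) - (-2 * β s - 2 * s) = (-2) * (β t - β s) + (-2) * (t - s) := by ring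
        rw [this]
        calc |(-2) * (β t - β s) + (-2) * (t - s)| ≤ |(-2) * (β t - β s)| + |(-2) * (t - s)| := abs_add_le _ _
          _ = 2 * |β t - β s| + 2 * (t - s) := by
              rw [abs_mul, abs_mul, abs_of_pos hts0]; norm_num
      have hexp1 : (1:ℝ) ≤ Real.exp (((n : ℝ) + 1) / 16) :=
        Real.one_le_exp (by positivity)
      nlinarith [Real.rpow_nonneg hts0.le α]
    -- max exponent bound
    have hmax : max (-2 * β t - 2 * t) (-2 * β s - 2 * s) ≤ -15 * s / 8 := by
      apply max_le _ hxs
      linarith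
    have hmain := abs_exp_sub_exp (-2 * β t - 2 * t) (-2 * β s - 2 * s)
    have hemax : Real.exp (max (-2 * β t - 2 * t) (-2 * β s - 2 * s)) ≤ Real.exp (-15 * s / 8) :=
      Real.exp_le_exp.2 hmax
    have step : |Real.exp (-2 * β t - 2 * t) - Real.exp (-2 * β s - 2 * s)|
        ≤ Real.exp (-15 * s / 8) * (6 * Real.exp (((n : ℝ) + 1) / 16) * (t - s) ^ α) := by
      calc |Real.exp (-2 * β t - 2 * t) - Real.exp (-2 * β s - 2 * s)|
          ≤ Real.exp (max (-2 * β t - 2 * t) (-2 * β s - 2 * s))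
            * |(-2 * β t - 2 * t) - (-2 * β s - 2 * s)| := hmain
        _ ≤ Real.exp (-15 * s / 8) * (6 * Real.exp (((n : ℝ) + 1) / 16) * (t - s) ^ α) := by
            exact mul_le_mul hemax hdiff (abs_nonneg _) (Real.exp_pos _).le
    have final : Real.exp (-15 * s / 8) * (6 * Real.exp (((n : ℝ) + 1) / 16))
        ≤ 100 * Real.exp 2 * Real.exp (-T / 3) := by
      have e5 : Real.exp (-15 * s / 8) * Real.exp (((n : ℝ) + 1) / 16)
          = Real.exp (-15 * s / 8 + ((n : ℝ) + 1) / 16) := (Real.exp_add _ _).symm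
      have e6 : Real.exp (-15 * s / 8 + ((n : ℝ) + 1) / 16) ≤ Real.exp (2 + -T / 3) :=
        Real.exp_le_exp.2 (by nlinarith)
      rw [mul_assoc 100, ← Real.exp_add]
      calc Real.exp (-15 * s / 8) * (6 * Real.exp (((n : ℝ) + 1) / 16))
          = 6 * (Real.exp (-15 * s / 8) * Real.exp (((n : ℝ) + 1) / 16)) := by ring
        _ = 6 * Real.exp (-15 * s / 8 + ((n : ℝ) + 1) / 16) := by rw [e5]
        _ ≤ 100 * Real.exp (2 + -T / 3) := by nlinarith [Real.exp_pos (2 + -T/3)]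
    rw [habs]
    calc |Real.exp (-2 * β t - 2 * t) - Real.exp (-2 * β s - 2 * s)|
        ≤ Real.exp (-15 * s / 8) * (6 * Real.exp (((n : ℝ) + 1) / 16)) * (t - s) ^ α := by
          rw [mul_assoc]; exact step
      _ ≤ 100 * Real.exp 2 * Real.exp (-T / 3) * (t - s) ^ α := by
          apply mul_le_mul_of_nonneg_right final (Real.rpow_nonneg hts0.le α)


/-- exponential decay of the Hölder seminorm of the geometric
Brownian motion `h t = exp (-2 β t - 2 t)` on `[T-1,∞)`, under the pathwise
growth bounds `|β t| ≤ t/16` for `t ≥ T-2` and the unit-interval Hölder bounds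
`‖β‖_{Ċ^α([n,n+1])} ≤ exp (n/16)` for integers `n ≥ T-2`. -/
theorem stmt_3 (α : ℝ) (hα0 : 0 < α) (hα1 : α < 1 / 2) :
    ∃ C : ℝ, 0 < C ∧ ∀ (β : ℝ → ℝ) (T : ℝ), Continuous β → 2 < T →
      (∀ t : ℝ, T - 2 ≤ t → |β t| ≤ t / 16) →
      (∀ n : ℕ, T - 2 ≤ (n : ℝ) →
        ∀ s ∈ Set.Icc (n : ℝ) ((n : ℝ) + 1), ∀ t ∈ Set.Icc (n : ℝ) ((n : ℝ) + 1),
          |β t - β s| ≤ Real.exp ((n : ℝ) / 16) * |t - s| ^ α) →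
      ∀ s t : ℝ, T - 1 ≤ s → T - 1 ≤ t → s ≠ t →
        |Real.exp (-2 * β t - 2 * t) - Real.exp (-2 * β s - 2 * s)|
          ≤ C * Real.exp (-T / 3) * |t - s| ^ α := by
  refine ⟨100 * Real.exp 2, by positivity, ?_⟩
  intro β T _ hT hg hH s t hs ht hst
  rcases hst.lt_or_gt with h | h
  · exact key_dir α hα0 hα1 β T hT hg hH s t hs h
  · rw [abs_sub_comm, abs_sub_comm t s]
    exact key_dir α hα0 hα1 β T hT hg hH t s ht h
end

section
/- Dyadic Whitney decomposition: partition [0,1] into dyadic intervals [(j-1)2^{-n}, j2^{-n}] for j ∈ {1,...,2^n}, n ∈ ℕ. Say I ∼ J if I and J have the same length, are not adjacent, have adjacent parents, and sup J < inf I. Then for almost every pair (x,y) ∈ [0,1]² with x < y there is exactly one pair of dyadic intervals (I,J) with I ∼ J, y ∈ I, and x ∈ J; equivalently, the indicator χ_{x<y}(x,y) = Σ_{I∼J} χ_I(y) χ_J(x) for almost all (x,y) ∈ [0,1]². -/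
open MeasureTheory Set

def whitneyPair (x y : ℝ) (n j i : ℕ) : Prop :=
  1 ≤ j ∧ i ≤ 2 ^ n ∧ j + 2 ≤ i ∧ (i + 1) / 2 = (j + 1) / 2 + 1 ∧
    x ∈ Set.Icc (((j : ℝ) - 1) * (2 : ℝ) ^ (-(n : ℤ))) ((j : ℝ) * (2 : ℝ) ^ (-(n : ℤ))) ∧
    y ∈ Set.Icc (((i : ℝ) - 1) * (2 : ℝ) ^ (-(n : ℤ))) ((i : ℝ) * (2 : ℝ) ^ (-(n : ℤ)))

private lemma hIccIff (a b x : ℝ) (n : ℕ) :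
    x ∈ Set.Icc (a * (2:ℝ)^(-(n:ℤ))) (b * (2:ℝ)^(-(n:ℤ))) ↔ a ≤ x * 2^n ∧ x * 2^n ≤ b := by
  have h : (2:ℝ)^(-(n:ℤ)) = ((2:ℝ)^n)⁻¹ := by rw [zpow_neg, zpow_natCast]
  have hp : (0:ℝ) < 2^n := by positivity
  rw [Set.mem_Icc, h, ← div_eq_mul_inv, ← div_eq_mul_inv, div_le_iff₀ hp, le_div_iff₀ hp]

lemma whitney_unique (x y : ℝ) (hx0 : 0 ≤ x) (hy1 : y ≤ 1) (hxy : x < y)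
    (hndx : ∀ k n : ℕ, x ≠ (k:ℝ) / 2^n) (hndy : ∀ k n : ℕ, y ≠ (k:ℝ) / 2^n) :
    ∃! t : ℕ × ℕ × ℕ, whitneyPair x y t.1 t.2.1 t.2.2 := by
  have hy0 : 0 ≤ y := le_of_lt (lt_of_le_of_lt hx0 hxy)
  have hylt1 : y < 1 := lt_of_le_of_ne hy1 (by simpa using hndy 1 0)
  set f : ℕ → ℕ := fun n => ⌊x * 2^n⌋₊ with hfdef
  set g : ℕ → ℕ := fun n => ⌊y * 2^n⌋₊ with hgdef
  have hfl : ∀ n, (f n : ℝ) < x * 2^n := by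
    intro n
    refine lt_of_le_of_ne (Nat.floor_le (by positivity)) fun h => hndx (f n) n ?_
    rw [eq_div_iff (by positivity : ((2:ℝ)^n) ≠ 0)]; linarith
  have hgl : ∀ n, (g n : ℝ) < y * 2^n := by
    intro n
    refine lt_of_le_of_ne (Nat.floor_le (by positivity)) fun h => hndy (g n) n ?_
    rw [eq_div_iff (by positivity : ((2:ℝ)^n) ≠ 0)]; linarith
  have hfu : ∀ n, x * 2^n < (f n : ℝ) + 1 := fun n => Nat.lt_floor_add_one _
  have hgu : ∀ n, y * 2^n < (g n : ℝ) + 1 := fun n => Nat.lt_floor_add_one _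
  have hfhalf : ∀ n, f (n+1) / 2 = f n := by
    intro n
    have h1 : f n * 2 ≤ f (n+1) := by
      apply Nat.le_floor
      push_cast
      rw [pow_succ]
      nlinarith [hfl n]
    have h2 : f (n+1) < f n * 2 + 2 := by
      have hr : x * 2^(n+1) < ((f n * 2 + 2 : ℕ) : ℝ) := by
        push_cast; rw [pow_succ]; nlinarith [hfu n]
      simpa [hfdef] using (Nat.floor_lt (by positivity : (0:ℝ) ≤ x * 2^(n+1))).2 hr
    omega
  have hghalf : ∀ n, g (n+1) / 2 = g n := by
    intro n
    have h1 : g n * 2 ≤ g (n+1) := by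
      apply Nat.le_floor
      push_cast
      rw [pow_succ]
      nlinarith [hgl n]
    have h2 : g (n+1) < g n * 2 + 2 := by
      have hr : y * 2^(n+1) < ((g n * 2 + 2 : ℕ) : ℝ) := by
        push_cast; rw [pow_succ]; nlinarith [hgu n]
      simpa [hgdef] using (Nat.floor_lt (by positivity : (0:ℝ) ≤ y * 2^(n+1))).2 hr
    omega
  have hchar_f : ∀ (n j : ℕ), 1 ≤ j →
      x ∈ Set.Icc (((j:ℝ) - 1) * (2:ℝ)^(-(n:ℤ))) ((j:ℝ) * (2:ℝ)^(-(n:ℤ))) → j = f n + 1 := by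
    intro n j hj hmem
    rw [hIccIff] at hmem
    obtain ⟨h1, h2⟩ := hmem
    have hl : j - 1 ≤ f n := Nat.le_floor (by push_cast [Nat.cast_sub hj]; linarith)
    have hu : f n < j := by exact_mod_cast lt_of_lt_of_le (hfl n) h2
    omega
  have hchar_g : ∀ (n i : ℕ), 1 ≤ i →
      y ∈ Set.Icc (((i:ℝ) - 1) * (2:ℝ)^(-(n:ℤ))) ((i:ℝ) * (2:ℝ)^(-(n:ℤ))) → i = g n + 1 := by
    intro n i hi hmem
    rw [hIccIff] at hmem
    obtain ⟨h1, h2⟩ := hmem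
    have hl : i - 1 ≤ g n := Nat.le_floor (by push_cast [Nat.cast_sub hi]; linarith)
    have hu : g n < i := by exact_mod_cast lt_of_lt_of_le (hgl n) h2
    omega
  have hglt : ∀ n, g n < 2^n := by
    intro n
    have : y * 2^n < ((2^n : ℕ) : ℝ) := by push_cast; nlinarith [pow_pos (by norm_num : (0:ℝ) < 2) n]
    exact (Nat.floor_lt (by positivity)).2 this
  have hP : ∃ n, f n + 2 ≤ g n := by
    obtain ⟨N, hN⟩ := pow_unbounded_of_one_lt ((3:ℝ)/(y-x)) (by norm_num : (1:ℝ) < 2)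
    have hyx : (0:ℝ) < y - x := by linarith
    have h3 : (3:ℝ) < (y - x) * 2^N := by
      rw [div_lt_iff₀ hyx] at hN; linarith [hN]
    refine ⟨N, ?_⟩
    have : (f N : ℝ) + 2 < g N := by nlinarith [hfl N, hgu N]
    have : (f N + 2 : ℕ) < g N := by exact_mod_cast (by push_cast; linarith : ((f N + 2 : ℕ) : ℝ) < g N)
    omega
  set n0 := Nat.find hP with hn0def
  have h2 : f n0 + 2 ≤ g n0 := Nat.find_spec hP
  have hmin : ∀ m, m < n0 → ¬ (f m + 2 ≤ g m) := fun m hm => Nat.find_min hP hm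
  have hg0 : g 0 = 0 := by
    simp only [hgdef, pow_zero, mul_one]
    exact Nat.floor_eq_zero.2 hylt1
  have hn0pos : 1 ≤ n0 := by
    by_contra h
    have : n0 = 0 := by omega
    rw [this] at h2
    omega
  obtain ⟨m, hm⟩ : ∃ m, n0 = m + 1 := ⟨n0 - 1, by omega⟩
  have hadj : g m = f m + 1 := by
    have ha := hfhalf m
    have hb := hghalf m
    have hc := hmin m (by omega)
    have hd : f (m+1) + 2 ≤ g (m+1) := hm ▸ h2
    omega
  have hmono : ∀ k, n0 ≤ k → f k + 2 ≤ g k := by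
    intro k hk
    induction k with
    | zero => omega
    | succ l ih =>
      rcases Nat.lt_or_ge n0 (l+1) with h | h
      · have hl := ih (by omega)
        have := hfhalf l
        have := hghalf l
        omega
      · have : n0 = l + 1 := by omega
        exact this ▸ h2
  refine ⟨⟨n0, f n0 + 1, g n0 + 1⟩, ?_, ?_⟩
  · show whitneyPair x y n0 (f n0 + 1) (g n0 + 1)
    unfold whitneyPair
    refine ⟨by omega, by have := hglt n0; omega, by omega, ?_, ?_, ?_⟩
    · have ha := hfhalf m
      have hb := hghalf m
      rw [hm] at *
      omega
    · rw [hIccIff]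
      push_cast
      exact ⟨by linarith [hfl n0], by linarith [hfu n0]⟩
    · rw [hIccIff]
      push_cast
      exact ⟨by linarith [hgl n0], by linarith [hgu n0]⟩
  · rintro ⟨n', j', i'⟩ ht'
    have ht2 : whitneyPair x y n' j' i' := ht'
    obtain ⟨hj1, hi2, hji, hpar, hxmem, hymem⟩ := ht2
    have hj' : j' = f n' + 1 := hchar_f n' j' hj1 hxmem
    have hi' : i' = g n' + 1 := hchar_g n' i' (by omega) hymem
    have hfg' : f n' + 2 ≤ g n' := by omega
    have hle : n0 ≤ n' := Nat.find_le hfg'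
    have hn'pos : 1 ≤ n' := by omega
    obtain ⟨m', hm'⟩ : ∃ m', n' = m' + 1 := ⟨n' - 1, by omega⟩
    have hadj' : g m' = f m' + 1 := by
      have ha := hfhalf m'
      have hb := hghalf m'
      rw [hm'] at hj' hi'
      omega
    have hn'eq : n' = n0 := by
      by_contra hne
      have : n0 ≤ m' := by omega
      have := hmono m' this
      omega
    subst hn'eq
    simp [hj', hi']

/-- dyadic Whitney decomposition of `{x < y} ⊆ [0,1]²`: for almost
every pair `(x,y) ∈ [0,1]²` with `x < y` there is exactly one pair of dyadic
intervals `I ∼ J` with `x ∈ J` and `y ∈ I`. -/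
theorem stmt_9 :
    ∀ᵐ z : ℝ × ℝ ∂(MeasureTheory.volume : MeasureTheory.Measure (ℝ × ℝ)),
      (z.1 ∈ Set.Icc (0 : ℝ) 1 ∧ z.2 ∈ Set.Icc (0 : ℝ) 1 ∧ z.1 < z.2) →
        ∃! t : ℕ × ℕ × ℕ, whitneyPair z.1 z.2 t.1 t.2.1 t.2.2 := by
  set D : Set ℝ := {x : ℝ | ∃ k n : ℕ, x = (k:ℝ) / 2^n} with hD
  have hDc : D.Countable := by
    have : D = ⋃ (k : ℕ) (n : ℕ), {(k:ℝ) / 2^n} := by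
      ext z; simp [hD, Set.mem_iUnion, eq_comm]
    rw [this]
    exact Set.countable_iUnion fun k => Set.countable_iUnion fun n => Set.countable_singleton _
  have hD0 : volume D = 0 := hDc.measure_zero _
  have hbad : volume {z : ℝ × ℝ | ¬ (z.1 ∉ D ∧ z.2 ∉ D)} = 0 := by
    have hsub : {z : ℝ × ℝ | ¬ (z.1 ∉ D ∧ z.2 ∉ D)} ⊆
        D ×ˢ (Set.univ : Set ℝ) ∪ (Set.univ : Set ℝ) ×ˢ D := by
      intro z hz
      simp only [Set.mem_setOf_eq, not_and_or, not_not] at hz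
      rcases hz with h | h
      · exact Or.inl ⟨h, Set.mem_univ _⟩
      · exact Or.inr ⟨Set.mem_univ _, h⟩
    refine measure_mono_null hsub (measure_union_null ?_ ?_)
    · rw [MeasureTheory.Measure.volume_eq_prod, MeasureTheory.Measure.prod_prod, hD0, zero_mul]
    · rw [MeasureTheory.Measure.volume_eq_prod, MeasureTheory.Measure.prod_prod, hD0, mul_zero]
  have hae : ∀ᵐ z : ℝ × ℝ, z.1 ∉ D ∧ z.2 ∉ D := by
    rw [MeasureTheory.ae_iff]
    exact hbad
  filter_upwards [hae] with z hz hcond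
  obtain ⟨hx, hy, hlt⟩ := hcond
  refine whitney_unique z.1 z.2 hx.1 hy.2 hlt ?_ ?_
  · intro k n h; exact hz.1 ⟨k, n, h⟩
  · intro k n h; exact hz.2 ⟨k, n, h⟩
end
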